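/- Let g : ℝⁿ → ℝⁿ be differentiable and satisfy the lower Lipschitz bound μ|x − x′| ≤ |g(x) − g(x′)| for all x, x′, where μ > 0, and suppose g(x⋆) = 0 for some x⋆ ∈ ℝⁿ. Define H(x) = ½|g(x)|². Then H satisfies the Polyak–Łojasiewicz inequality |∇H(x)|² ≥ 2μ²·(H(x) − H(x⋆)) = 2μ²·H(x) for all x ∈ ℝⁿ. -/

import Mathlib

/-! The gradient of `½‖g‖²` at `x` is `(Dg x)† (g x)`. The lower Lipschitz bound passes to the
derivative, `μ‖v‖ ≤ ‖Dg x v‖`, so `Dg x` is injective, hence invertible in finite dimension; writing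
`g x = Dg x v` then gives `‖g x‖² = ⟪(Dg x)† (g x), v⟫ ≤ ‖∇H x‖ ‖v‖ ≤ ‖∇H x‖ ‖g x‖ / μ`. -/

open ContinuousLinearMap

theorem HasFDerivAt.mul_norm_le_norm_apply {E F : Type*} [NormedAddCommGroup E] [NormedSpace ℝ E]
    [NormedAddCommGroup F] [NormedSpace ℝ F] {g : E → F} {A : E →L[ℝ] F} {x : E} {μ : ℝ}
    (hA : HasFDerivAt g A x) (hlow : ∀ y, μ * ‖y - x‖ ≤ ‖g y - g x‖) (v : E) :
    μ * ‖v‖ ≤ ‖A v‖ := by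
  refine ge_of_tendsto (hA.hasLineDerivAt v).tendsto_slope_zero_right.norm ?_
  filter_upwards [self_mem_nhdsWithin] with t (ht : 0 < t)
  have hslope := hlow (x + t • v)
  rw [add_sub_cancel_left, norm_smul, Real.norm_of_nonneg ht.le] at hslope
  rw [norm_smul, norm_inv, Real.norm_of_nonneg ht.le, le_inv_mul_iff₀ ht]
  linarith

theorem ContinuousLinearMap.surjective_of_mul_norm_le_norm_apply {E : Type*}
    [NormedAddCommGroup E] [NormedSpace ℝ E] [FiniteDimensional ℝ E] {A : E →L[ℝ] E} {μ : ℝ}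
    (hμ : 0 < μ) (hA : ∀ v, μ * ‖v‖ ≤ ‖A v‖) : Function.Surjective A := by
  have hinj : Function.Injective (A : E →ₗ[ℝ] E) := by
    refine (injective_iff_map_eq_zero _).mpr fun v hv => norm_le_zero_iff.mp ?_
    have := hA v
    rw [show A v = 0 from hv, norm_zero] at this
    exact nonpos_of_mul_nonpos_right this hμ
  exact LinearMap.injective_iff_surjective.mp hinj

theorem ContinuousLinearMap.mul_norm_le_norm_adjoint_apply {E F : Type*}
    [NormedAddCommGroup E] [InnerProductSpace ℝ E] [CompleteSpace E]
    [NormedAddCommGroup F] [InnerProductSpace ℝ F] [CompleteSpace F]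
    {A : E →L[ℝ] F} {μ : ℝ} (hμ : 0 ≤ μ) (hsurj : Function.Surjective A)
    (hA : ∀ v, μ * ‖v‖ ≤ ‖A v‖) (w : F) : μ * ‖w‖ ≤ ‖adjoint A w‖ := by
  obtain ⟨v, rfl⟩ := hsurj w
  have hinner : ‖A v‖ ^ 2 ≤ ‖adjoint A (A v)‖ * ‖v‖ := by
    rw [← real_inner_self_eq_norm_sq, ← adjoint_inner_left]
    exact real_inner_le_norm _ _
  rcases (norm_nonneg (A v)).eq_or_lt with h0 | hpos
  · rw [← h0, mul_zero]
    exact norm_nonneg _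
  · refine le_of_mul_le_mul_right ?_ hpos
    calc μ * ‖A v‖ * ‖A v‖ = μ * ‖A v‖ ^ 2 := by ring
      _ ≤ μ * (‖adjoint A (A v)‖ * ‖v‖) := by gcongr
      _ = ‖adjoint A (A v)‖ * (μ * ‖v‖) := by ring
      _ ≤ ‖adjoint A (A v)‖ * ‖A v‖ := by gcongr; exact hA v

theorem HasFDerivAt.hasGradientAt_half_norm_sq {E F : Type*}
    [NormedAddCommGroup E] [InnerProductSpace ℝ E] [CompleteSpace E]
    [NormedAddCommGroup F] [InnerProductSpace ℝ F] [CompleteSpace F]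
    {g : E → F} {A : E →L[ℝ] F} {x : E} (hA : HasFDerivAt g A x) :
    HasGradientAt (fun y => (1 / 2 : ℝ) * ‖g y‖ ^ 2) (adjoint A (g x)) x := by
  rw [hasGradientAt_iff_hasFDerivAt]
  refine (hA.norm_sq.const_mul (1 / 2 : ℝ)).congr_fderiv ?_
  ext w
  simp [adjoint_inner_left]

/-- If `g` is differentiable with lower Lipschitz constant `μ > 0` and
`g(x⋆) = 0`, then `H(x) = ½|g(x)|²` satisfies the Polyak–Łojasiewicz inequality
`|∇H(x)|² ≥ 2μ²·(H(x) − H(x⋆)) = 2μ²·H(x)` for all `x`. -/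
theorem plnet_polyak_lojasiewicz
    {n : ℕ} (μ : ℝ) (hμ : 0 < μ)
    (g : EuclideanSpace ℝ (Fin n) → EuclideanSpace ℝ (Fin n))
    (hg : Differentiable ℝ g)
    (hlow : ∀ x x' : EuclideanSpace ℝ (Fin n), μ * ‖x - x'‖ ≤ ‖g x - g x'‖)
    (xs : EuclideanSpace ℝ (Fin n)) (hxs : g xs = 0)
    (H : EuclideanSpace ℝ (Fin n) → ℝ)
    (hH : H = fun x => (1 / 2 : ℝ) * ‖g x‖ ^ 2) :
    H xs = 0 ∧
      ∀ x : EuclideanSpace ℝ (Fin n),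
        2 * μ ^ 2 * (H x - H xs) ≤ ‖gradient H x‖ ^ 2 := by
  have hHxs : H xs = 0 := by simp [hH, hxs]
  refine ⟨hHxs, fun x => ?_⟩
  have hA := (hg x).hasFDerivAt
  have hAlow := hA.mul_norm_le_norm_apply fun y => hlow y x
  have hgrad : μ * ‖g x‖ ≤ ‖gradient H x‖ := by
    rw [hH, hA.hasGradientAt_half_norm_sq.gradient]
    exact mul_norm_le_norm_adjoint_apply hμ.le
      (surjective_of_mul_norm_le_norm_apply hμ hAlow) hAlow (g x)
  calc 2 * μ ^ 2 * (H x - H xs) = (μ * ‖g x‖) ^ 2 := by rw [hHxs, hH]; ring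
    _ ≤ ‖gradient H x‖ ^ 2 := by gcongr
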